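/- Let $\zeta\in\mathbb{R}^2$, $r\ge0$, $\vartheta\in[-\pi/2,\pi/2]$ with $(\zeta,r)\ne(0,0)$. Then the only bounded solution $v:[0,\infty)\to\mathbb{C}$ of the fourth-order ODE $v''''(t)-2|\zeta|^2 v''(t)+(|\zeta|^4+re^{i\vartheta})v(t)=0$ with initial conditions $v(0)=v'(0)=0$ is $v\equiv0$. -/

import Mathlib

/-!
Write the symbol as `(μ² - p²)(μ² - m²)` with `Re p, Re m > 0`. Then `g = v'' - m² v` and
`h = v'' - p² v` satisfy `g'' = p² g` and `h'' = m² h`, so on `[0, ∞)` they are combinations of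
`e^{±pt}` and `e^{±mt}`. If `p ≠ m`, then `v = (g - h) / (p² - m²)`; if `p = m`, then
`2m² v - t g'` solves `U'' = m² U`. Either way `v` is an explicit exponential polynomial.
Boundedness kills the coefficients of the growing modes `e^{pt}, e^{mt}` (resp. `e^{mt}, t e^{mt}`),
and the conditions `v(0) = v'(0) = 0` then kill the two decaying ones.
-/

open Set Complex Filter Asymptotics

theorem hasDerivAt_cexp_mul_ofReal (μ : ℂ) (t : ℝ) :
    HasDerivAt (fun s : ℝ => cexp (μ * s)) (μ * cexp (μ * t)) t := by
  simpa [mul_comm] using ((hasDerivAt_id (t : ℂ)).const_mul μ).cexp.comp_ofReal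

theorem ContDiff.hasDerivAt_iteratedDeriv {𝕜 F : Type*} [NontriviallyNormedField 𝕜]
    [NormedAddCommGroup F] [NormedSpace 𝕜 F] {f : 𝕜 → F} {n k : ℕ}
    (hf : ContDiff 𝕜 n f) (hk : k < n) (t : 𝕜) :
    HasDerivAt (iteratedDeriv k f) (iteratedDeriv (k + 1) f t) t := by
  rw [iteratedDeriv_succ]
  exact (hf.differentiable_iteratedDeriv k (by exact_mod_cast hk) t).hasDerivAt

theorem eq_mul_cexp_of_hasDerivAt {f : ℝ → ℂ} {μ : ℂ}
    (hf : ∀ t, 0 ≤ t → HasDerivAt f (μ * f t) t) {t : ℝ} (ht : 0 ≤ t) :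
    f t = f 0 * cexp (μ * t) := by
  have hφ : ∀ s, 0 ≤ s → HasDerivAt (fun s => f s * cexp (-μ * s)) 0 s := fun s hs =>
    ((hf s hs).mul (hasDerivAt_cexp_mul_ofReal (-μ) s)).congr_deriv (by ring)
  have hconst := constant_of_has_deriv_right_zero
    (fun s hs => (hφ s hs.1).continuousAt.continuousWithinAt)
    (fun s hs => (hφ s hs.1).hasDerivWithinAt) t ⟨ht, le_rfl⟩
  have hexp : cexp (-μ * t) * cexp (μ * t) = 1 := by rw [← Complex.exp_add]; simp
  simp only [ofReal_zero, mul_zero, Complex.exp_zero, mul_one] at hconst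
  linear_combination cexp (μ * t) * hconst - f t * hexp

theorem exists_eq_exp_add_exp_of_hasDerivAt {f f' : ℝ → ℂ} {μ : ℂ} (hμ : μ ≠ 0)
    (hf : ∀ t, 0 ≤ t → HasDerivAt f (f' t) t)
    (hf' : ∀ t, 0 ≤ t → HasDerivAt f' (μ ^ 2 * f t) t) :
    ∃ A B : ℂ, ∀ t, 0 ≤ t → f t = A * cexp (μ * t) + B * cexp (-μ * t) ∧
      f' t = μ * (A * cexp (μ * t) - B * cexp (-μ * t)) := by
  have hq : ∀ t, 0 ≤ t → f' t + μ * f t = (f' 0 + μ * f 0) * cexp (μ * t) :=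
    fun t ht => eq_mul_cexp_of_hasDerivAt (f := fun s => f' s + μ * f s)
      (fun s hs => ((hf' s hs).add ((hf s hs).const_mul μ)).congr_deriv (by ring)) ht
  set A := (f' 0 + μ * f 0) / (2 * μ)
  have hA : 2 * μ * A = f' 0 + μ * f 0 := mul_div_cancel₀ _ (mul_ne_zero two_ne_zero hμ)
  have hd : ∀ t, 0 ≤ t → f t - A * cexp (μ * t) = (f 0 - A) * cexp (-μ * t) := by
    intro t ht
    simpa using eq_mul_cexp_of_hasDerivAt (f := fun s => f s - A * cexp (μ * s)) (μ := -μ)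
      (fun s hs => ((hf s hs).sub ((hasDerivAt_cexp_mul_ofReal μ s).const_mul A)).congr_deriv
        (by linear_combination hq s hs - cexp (μ * s) * hA)) ht
  refine ⟨A, f 0 - A, fun t ht => ⟨by linear_combination hd t ht, ?_⟩⟩
  linear_combination hq t ht - μ * hd t ht - cexp (μ * t) * hA

theorem eq_zero_of_isBigO_mul_cexp {c μ : ℂ} (hμ : 0 < μ.re)
    (h : (fun t : ℝ => c * cexp (μ * t)) =O[atTop] fun _ => (1 : ℝ)) : c = 0 := by
  by_contra hc
  refine not_isBoundedUnder_of_tendsto_atTop ?_ ((isBigO_one_iff ℝ).mp h)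
  have hnorm : ∀ t : ℝ, ‖c * cexp (μ * t)‖ = ‖c‖ * Real.exp (μ.re * t) := by
    simp [Complex.norm_exp]
  simp only [hnorm]
  exact (Real.tendsto_exp_atTop.comp (tendsto_id.const_mul_atTop hμ)).const_mul_atTop
    (norm_pos_iff.mpr hc)

theorem isBigO_comp_add_const {E : Type*} [Norm E] {f : ℝ → E}
    (h : f =O[atTop] fun _ => (1 : ℝ)) (s : ℝ) :
    (fun t => f (t + s)) =O[atTop] fun _ => (1 : ℝ) :=
  h.comp_tendsto (tendsto_atTop_add_const_right _ s tendsto_id)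

theorem exists_cexp_mul_ofReal_ne_one {z : ℂ} (hz : z ≠ 0) :
    ∃ s : ℝ, cexp (z * s) ≠ 1 := by
  have hz' : 0 < ‖z‖ := norm_pos_iff.mpr hz
  refine ⟨‖z‖⁻¹, fun h => ?_⟩
  obtain ⟨n, hn⟩ := Complex.exp_eq_one_iff.mp h
  have hnorm := congrArg norm hn
  rw [norm_mul, norm_real, Real.norm_of_nonneg (inv_nonneg.mpr hz'.le), mul_inv_cancel₀ hz'.ne']
    at hnorm
  simp only [norm_mul, norm_intCast, Complex.norm_ofNat, norm_real, norm_I, mul_one,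
    Real.norm_of_nonneg Real.pi_pos.le] at hnorm
  rcases eq_or_ne n 0 with rfl | hn0
  · simp at hnorm
  · have : (1 : ℝ) ≤ |(n : ℝ)| := by exact_mod_cast Int.one_le_abs hn0
    nlinarith [Real.pi_gt_three]

theorem eq_zero_of_isBigO_mul_cexp_add_mul_cexp {A C p m : ℂ} (hp : 0 < p.re) (hm : 0 < m.re)
    (hpm : p ≠ m)
    (h : (fun t : ℝ => A * cexp (p * t) + C * cexp (m * t)) =O[atTop] fun _ => (1 : ℝ)) :
    A = 0 ∧ C = 0 := by
  obtain ⟨s, hs⟩ := exists_cexp_mul_ofReal_ne_one (sub_ne_zero.mpr hpm)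
  -- shifting by `s` and subtracting `cexp (m * s)` times the original removes the `m`-mode
  have hshift : (fun t : ℝ => (A * (cexp (p * s) - cexp (m * s))) * cexp (p * t)) =O[atTop]
      fun _ => (1 : ℝ) := by
    refine ((isBigO_comp_add_const h s).sub (h.const_mul_left (cexp (m * s)))).congr_left
      fun t => ?_
    simp only [ofReal_add, mul_add, Complex.exp_add]
    ring
  have hps : cexp (p * s) - cexp (m * s) ≠ 0 := by
    rw [sub_ne_zero]
    intro heq
    apply hs
    rw [sub_mul, Complex.exp_sub, heq, div_self (Complex.exp_ne_zero _)]
  have hA : A = 0 := (mul_eq_zero.mp (eq_zero_of_isBigO_mul_cexp hp hshift)).resolve_right hps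
  subst hA
  exact ⟨rfl, eq_zero_of_isBigO_mul_cexp hm (by simpa using h)⟩

theorem eq_zero_of_isBigO_linear_mul_cexp {A B m : ℂ} (hm : 0 < m.re)
    (h : (fun t : ℝ => (A + B * t) * cexp (m * t)) =O[atTop] fun _ => (1 : ℝ)) :
    A = 0 ∧ B = 0 := by
  have hshift : (fun t : ℝ => (B * cexp m) * cexp (m * t)) =O[atTop] fun _ => (1 : ℝ) := by
    refine ((isBigO_comp_add_const h 1).sub (h.const_mul_left (cexp m))).congr_left fun t => ?_
    simp only [ofReal_add, ofReal_one, mul_add, mul_one, Complex.exp_add]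
    ring
  have hB : B = 0 :=
    (mul_eq_zero.mp (eq_zero_of_isBigO_mul_cexp hm hshift)).resolve_right (Complex.exp_ne_zero _)
  subst hB
  exact ⟨eq_zero_of_isBigO_mul_cexp hm (by simpa using h), rfl⟩

theorem isBigO_cexp_neg_mul {μ : ℂ} (hμ : 0 < μ.re) :
    (fun t : ℝ => cexp (-μ * t)) =O[atTop] fun _ => (1 : ℝ) := by
  refine IsBigO.of_bound 1 ((eventually_ge_atTop 0).mono fun t ht => ?_)
  rw [Complex.norm_exp, norm_one, one_mul, Real.exp_le_one_iff]
  simp only [neg_mul, neg_re, mul_re, ofReal_re, ofReal_im, mul_zero, sub_zero]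
  nlinarith

theorem isBigO_ofReal_mul_cexp_neg_mul {μ : ℂ} (hμ : 0 < μ.re) :
    (fun t : ℝ => (t : ℂ) * cexp (-μ * t)) =O[atTop] fun _ => (1 : ℝ) := by
  refine IsBigO.of_bound (Real.exp (-1) / μ.re) ((eventually_ge_atTop 0).mono fun t ht => ?_)
  rw [norm_mul, Complex.norm_exp, norm_real, Real.norm_of_nonneg ht, norm_one, mul_one,
    le_div_iff₀ hμ]
  have := Real.mul_exp_neg_le_exp_neg_one (μ.re * t)
  simp only [neg_mul, neg_re, mul_re, ofReal_re, ofReal_im, mul_zero, sub_zero] at this ⊢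
  linarith

section FactoredODE

variable {v : ℝ → ℂ} {p m : ℂ}

theorem exists_eq_exp_add_exp_of_factored_ode (hv : ContDiff ℝ 4 v) (hp : p ≠ 0)
    (hode : ∀ t, 0 ≤ t → iteratedDeriv 4 v t - (p ^ 2 + m ^ 2) * iteratedDeriv 2 v t
      + p ^ 2 * m ^ 2 * v t = 0) :
    ∃ A B : ℂ, ∀ t, 0 ≤ t →
      iteratedDeriv 2 v t - m ^ 2 * v t = A * cexp (p * t) + B * cexp (-p * t) ∧
      iteratedDeriv 3 v t - m ^ 2 * iteratedDeriv 1 v t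
        = p * (A * cexp (p * t) - B * cexp (-p * t)) := by
  have hd := fun k (hk : k < 4) t => hv.hasDerivAt_iteratedDeriv (by exact_mod_cast hk) t
  have hv0 : ∀ t, HasDerivAt v (iteratedDeriv 1 v t) t := by simpa using hd 0 (by norm_num)
  exact exists_eq_exp_add_exp_of_hasDerivAt hp
    (fun t _ => (hd 2 (by norm_num) t).sub ((hv0 t).const_mul _))
    (fun t ht => ((hd 3 (by norm_num) t).sub ((hd 1 (by norm_num) t).const_mul _)).congr_deriv
      (by linear_combination hode t ht))

theorem exists_eq_exp_add_exp_of_factored_ode_self (hv : ContDiff ℝ 4 v) (hm : m ≠ 0)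
    (hode : ∀ t, 0 ≤ t → iteratedDeriv 4 v t - (m ^ 2 + m ^ 2) * iteratedDeriv 2 v t
      + m ^ 2 * m ^ 2 * v t = 0) :
    ∃ C D : ℂ, ∀ t, 0 ≤ t →
      2 * m ^ 2 * v t - t * (iteratedDeriv 3 v t - m ^ 2 * iteratedDeriv 1 v t)
        = C * cexp (m * t) + D * cexp (-m * t) ∧
      2 * m ^ 2 * iteratedDeriv 1 v t - (iteratedDeriv 3 v t - m ^ 2 * iteratedDeriv 1 v t)
        - m ^ 2 * t * (iteratedDeriv 2 v t - m ^ 2 * v t)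
        = m * (C * cexp (m * t) - D * cexp (-m * t)) := by
  have hd := fun k (hk : k < 4) t => hv.hasDerivAt_iteratedDeriv (by exact_mod_cast hk) t
  have hv0 : ∀ t, HasDerivAt v (iteratedDeriv 1 v t) t := by simpa using hd 0 (by norm_num)
  have hid : ∀ t : ℝ, HasDerivAt (fun s : ℝ => (s : ℂ)) 1 t :=
    fun t => (hasDerivAt_id t).ofReal_comp
  exact exists_eq_exp_add_exp_of_hasDerivAt hm
    (fun t ht => (((hv0 t).const_mul _).sub ((hid t).mul
      ((hd 3 (by norm_num) t).sub ((hd 1 (by norm_num) t).const_mul _)))).congr_deriv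
        (by simp only [Pi.sub_apply]; linear_combination (-(t : ℂ)) * hode t ht))
    (fun t ht => ((((hd 1 (by norm_num) t).const_mul _).sub
      ((hd 3 (by norm_num) t).sub ((hd 1 (by norm_num) t).const_mul _))).sub
      (((hid t).const_mul _).mul ((hd 2 (by norm_num) t).sub ((hv0 t).const_mul _)))).congr_deriv
        (by simp only [Pi.sub_apply, Nat.reduceAdd]; linear_combination -hode t ht))

theorem eq_zero_of_factored_ode_of_ne (hp : 0 < p.re) (hm : 0 < m.re) (hpm : p ≠ m)
    (hv : ContDiff ℝ 4 v)
    (hode : ∀ t, 0 ≤ t → iteratedDeriv 4 v t - (p ^ 2 + m ^ 2) * iteratedDeriv 2 v t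
      + p ^ 2 * m ^ 2 * v t = 0)
    (hbdd : v =O[atTop] fun _ => (1 : ℝ)) (h0 : v 0 = 0) (h0' : deriv v 0 = 0) {t : ℝ}
    (ht : 0 ≤ t) : v t = 0 := by
  have hp0 : p ≠ 0 := fun h => by simp [h] at hp
  have hm0 : m ≠ 0 := fun h => by simp [h] at hm
  obtain ⟨A, B, hAB⟩ := exists_eq_exp_add_exp_of_factored_ode hv hp0 hode
  obtain ⟨C, D, hCD⟩ := exists_eq_exp_add_exp_of_factored_ode (p := m) (m := p) hv hm0
    fun t ht => by linear_combination hode t ht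
  have hδ : p ^ 2 - m ^ 2 ≠ 0 := by
    rw [sq_sub_sq]
    refine mul_ne_zero (fun h => ?_) (sub_ne_zero.mpr hpm)
    have := congrArg re h
    simp only [add_re, zero_re] at this
    linarith
  have hrep : ∀ t, 0 ≤ t → (p ^ 2 - m ^ 2) * v t
      = (A * cexp (p * t) - C * cexp (m * t)) + (B * cexp (-p * t) - D * cexp (-m * t)) :=
    fun t ht => by linear_combination (hAB t ht).1 - (hCD t ht).1
  have hgrow : (fun t : ℝ => A * cexp (p * t) + (-C) * cexp (m * t)) =O[atTop]
      fun _ => (1 : ℝ) := by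
    refine (((hbdd.const_mul_left (p ^ 2 - m ^ 2)).sub
      ((isBigO_cexp_neg_mul hp).const_mul_left B)).add
      ((isBigO_cexp_neg_mul hm).const_mul_left D)).congr'
      ((eventually_ge_atTop 0).mono fun t ht => ?_) EventuallyEq.rfl
    linear_combination hrep t ht
  obtain ⟨rfl, hC⟩ := eq_zero_of_isBigO_mul_cexp_add_mul_cexp hp hm hpm hgrow
  obtain rfl : C = 0 := neg_eq_zero.mp hC
  obtain rfl : B = D := by simpa [h0, sub_eq_zero] using (hrep 0 le_rfl).symm
  have hB : B = 0 := by
    have h1 := (hAB 0 le_rfl).2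
    have h2 := (hCD 0 le_rfl).2
    simp only [ofReal_zero, mul_zero, Complex.exp_zero, mul_one, iteratedDeriv_one, h0'] at h1 h2
    have : (m - p) * B = 0 := by linear_combination h2 - h1
    exact (mul_eq_zero.mp this).resolve_left (sub_ne_zero.mpr hpm.symm)
  have := hrep t ht
  simp only [hB, zero_mul, sub_zero, add_zero] at this
  exact (mul_eq_zero.mp this).resolve_left hδ

theorem eq_zero_of_factored_ode_self (hm : 0 < m.re) (hv : ContDiff ℝ 4 v)
    (hode : ∀ t, 0 ≤ t → iteratedDeriv 4 v t - (m ^ 2 + m ^ 2) * iteratedDeriv 2 v t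
      + m ^ 2 * m ^ 2 * v t = 0)
    (hbdd : v =O[atTop] fun _ => (1 : ℝ)) (h0 : v 0 = 0) (h0' : deriv v 0 = 0) {t : ℝ}
    (ht : 0 ≤ t) : v t = 0 := by
  have hm0 : m ≠ 0 := fun h => by simp [h] at hm
  obtain ⟨A, B, hAB⟩ := exists_eq_exp_add_exp_of_factored_ode hv hm0 hode
  obtain ⟨C, D, hCD⟩ := exists_eq_exp_add_exp_of_factored_ode_self hv hm0 hode
  have hrep : ∀ t, 0 ≤ t → 2 * m ^ 2 * v t
      = (C + m * A * t) * cexp (m * t) + (D - m * B * t) * cexp (-m * t) :=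
    fun t ht => by linear_combination (hCD t ht).1 + t * (hAB t ht).2
  have hgrow : (fun t : ℝ => (C + m * A * t) * cexp (m * t)) =O[atTop] fun _ => (1 : ℝ) := by
    refine (((hbdd.const_mul_left (2 * m ^ 2)).sub
      ((isBigO_cexp_neg_mul hm).const_mul_left D)).add
      ((isBigO_ofReal_mul_cexp_neg_mul hm).const_mul_left (m * B))).congr'
      ((eventually_ge_atTop 0).mono fun t ht => ?_) EventuallyEq.rfl
    linear_combination hrep t ht
  obtain ⟨rfl, hA⟩ := eq_zero_of_isBigO_linear_mul_cexp hm hgrow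
  have hAB0 := hAB 0 le_rfl
  have hCD0 := hCD 0 le_rfl
  simp only [ofReal_zero, mul_zero, Complex.exp_zero, mul_one, zero_mul, sub_zero, h0,
    iteratedDeriv_one, h0'] at hAB0 hCD0
  have hD : D = 0 := by linear_combination -hCD0.1
  have hB : m * B = 0 := by linear_combination hA + hAB0.2 + hCD0.2 - m * hD
  have : 2 * m ^ 2 * v t = 0 := by
    linear_combination hrep t ht + (t * cexp (m * t)) * hA - (t * cexp (-m * t)) * hB
      + cexp (-m * t) * hD
  exact (mul_eq_zero.mp this).resolve_left (by simp [hm0])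

theorem eq_zero_of_factored_ode (hp : 0 < p.re) (hm : 0 < m.re) (hv : ContDiff ℝ 4 v)
    (hode : ∀ t, 0 ≤ t → iteratedDeriv 4 v t - (p ^ 2 + m ^ 2) * iteratedDeriv 2 v t
      + p ^ 2 * m ^ 2 * v t = 0)
    (hbdd : v =O[atTop] fun _ => (1 : ℝ)) (h0 : v 0 = 0) (h0' : deriv v 0 = 0) {t : ℝ}
    (ht : 0 ≤ t) : v t = 0 := by
  rcases eq_or_ne p m with rfl | hpm
  · exact eq_zero_of_factored_ode_self hm hv hode hbdd h0 h0' ht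
  · exact eq_zero_of_factored_ode_of_ne hp hm hpm hv hode hbdd h0 h0' ht

end FactoredODE

theorem Complex.exists_sq_eq_of_mem_slitPlane {z : ℂ} (hz : z ∈ slitPlane) :
    ∃ w : ℂ, 0 < w.re ∧ w ^ 2 = z := by
  obtain ⟨harg, hz0⟩ := mem_slitPlane_iff_arg.mp hz
  refine ⟨sqrt z, ?_, cpow_nat_inv_pow z two_ne_zero⟩
  rw [sqrt_eq_exp hz0, exp_re]
  refine mul_pos (Real.exp_pos _) (Real.cos_pos_of_mem_Ioo ⟨?_, ?_⟩)
  · simp only [div_ofNat_im, log_im]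
    linarith [neg_pi_lt_arg z]
  · simp only [div_ofNat_im, log_im]
    linarith [lt_of_le_of_ne (arg_le_pi z) harg]

theorem stmt5 (ζ : EuclideanSpace ℝ (Fin 2)) (r ϑ : ℝ) (hr : 0 ≤ r)
    (hϑ : ϑ ∈ Icc (-(Real.pi / 2)) (Real.pi / 2))
    (hnz : ¬(ζ = 0 ∧ r = 0))
    (v : ℝ → ℂ) (hv : ContDiff ℝ 4 v)
    (hode : ∀ t : ℝ, 0 ≤ t →
      iteratedDeriv 4 v t - 2 * (‖ζ‖ ^ 2 : ℝ) * iteratedDeriv 2 v t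
        + (((‖ζ‖ ^ 4 : ℝ) : ℂ) + (r : ℂ) * Complex.exp (ϑ * Complex.I)) * v t = 0)
    (hbdd : ∃ K : ℝ, ∀ t : ℝ, 0 ≤ t → ‖v t‖ ≤ K)
    (h0 : v 0 = 0) (h0' : deriv v 0 = 0) :
    ∀ t : ℝ, 0 ≤ t → v t = 0 := by
  obtain ⟨K, hK⟩ := hbdd
  -- `p², m² = ‖ζ‖² ± I w` are the roots of `(X - ‖ζ‖²)² + r e^{iϑ}`
  obtain ⟨w, hw2, hw⟩ :
      ∃ w : ℂ, w ^ 2 = r * cexp (ϑ * I) ∧ ((r = 0 ∧ w = 0) ∨ 0 < w.re) := by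
    refine ⟨Real.sqrt r * cexp ((ϑ / 2 : ℝ) * I), ?_, ?_⟩
    · rw [mul_pow, ← ofReal_pow, Real.sq_sqrt hr, ← Complex.exp_nat_mul]
      push_cast
      ring_nf
    · rcases hr.eq_or_lt with rfl | hr0
      · simp
      · right
        rw [re_ofReal_mul, exp_ofReal_mul_I_re]
        exact mul_pos (Real.sqrt_pos.mpr hr0) (Real.cos_pos_of_mem_Ioo
          ⟨by linarith [hϑ.1, Real.pi_pos], by linarith [hϑ.2, Real.pi_pos]⟩)
  have hslit :
      ∀ σ : ℂ, σ = I ∨ σ = -I → ((‖ζ‖ ^ 2 : ℝ) : ℂ) + σ * w ∈ slitPlane := by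
    rintro σ hσ
    rw [mem_slitPlane_iff, add_re, add_im, ofReal_re, ofReal_im, zero_add]
    rcases hw with ⟨rfl, rfl⟩ | hw
    · have hζ : ζ ≠ 0 := fun h => hnz ⟨h, rfl⟩
      simpa using pow_pos (norm_pos_iff.mpr hζ) 2
    · right
      rcases hσ with rfl | rfl <;> simp [hw.ne']
  obtain ⟨p, hp, hp2⟩ := exists_sq_eq_of_mem_slitPlane (hslit I (.inl rfl))
  obtain ⟨m, hm, hm2⟩ := exists_sq_eq_of_mem_slitPlane (hslit (-I) (.inr rfl))
  have hbdd' : v =O[atTop] fun _ => (1 : ℝ) :=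
    IsBigO.of_bound K ((eventually_ge_atTop 0).mono fun t ht => by simpa using hK t ht)
  refine fun t ht => eq_zero_of_factored_ode hp hm hv (fun t ht => ?_) hbdd' h0 h0' ht
  have hζ4 : ((‖ζ‖ ^ 4 : ℝ) : ℂ) = ((‖ζ‖ ^ 2 : ℝ) : ℂ) ^ 2 := by push_cast; ring
  rw [hp2, hm2]
  linear_combination hode t ht - v t * hζ4 + v t * hw2 - w ^ 2 * v t * I_sq
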